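/- The fixed point of the morphism f on {0,1,2,3} defined by f(0)=01, f(1)=21, f(2)=03, f(3)=23 (iterated from 0) is a reduced word, i.e., it contains no occurrence of any of the factors 02, 20, 13, 31. -/
import Mathlib


def SqFree {α : Type*} (w : List α) : Prop :=
  ∀ v : List α, v ≠ [] → ¬ (v ++ v) <:+: w

def Reduced (w : List (Fin 4)) : Prop :=
  ∀ p ∈ ([[0,2],[2,0],[1,3],[3,1]] : List (List (Fin 4))), ¬ p <:+: w

def DeanWord (w : List (Fin 4)) : Prop := Reduced w ∧ SqFree w

def IFactor {α : Type*} (v : List α) (w : ℕ → α) : Prop :=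
  ∃ i, v = (List.range v.length).map fun k => w (i + k)

def ISqFree {α : Type*} (w : ℕ → α) : Prop :=
  ∀ v : List α, v ≠ [] → ¬ IFactor (v ++ v) w

def IReduced (w : ℕ → Fin 4) : Prop :=
  ∀ p ∈ ([[0,2],[2,0],[1,3],[3,1]] : List (List (Fin 4))), ¬ IFactor p w

def IDean (w : ℕ → Fin 4) : Prop := IReduced w ∧ ISqFree w

def f : Fin 4 → List (Fin 4) := ![[0,1],[2,1],[0,3],[2,3]]

/-- The fixed point `f^ω(0)`: for a 2-uniform morphism, letter `n` of the fixed
point is letter `n % 2` of the image of letter `n / 2`. -/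
def D : ℕ → Fin 4
  | 0 => 0
  | n + 1 => (f (D ((n + 1) / 2))).getD ((n + 1) % 2) 0
decreasing_by exact Nat.div_lt_self (Nat.succ_pos n) one_lt_two

lemma Dparity (n : ℕ) :
    (n % 2 = 0 → D n = 0 ∨ D n = 2) ∧ (n % 2 = 1 → D n = 1 ∨ D n = 3) := by
  match n with
  | 0 => simp [D]
  | m + 1 =>
    constructor
    · intro h
      rw [D, h]
      exact (by decide : ∀ x : Fin 4, (f x).getD 0 0 = 0 ∨ (f x).getD 0 0 = 2) _
    · intro h
      rw [D, h]
      exact (by decide : ∀ x : Fin 4, (f x).getD 1 0 = 1 ∨ (f x).getD 1 0 = 3) _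

theorem stmt1 : IReduced D := by
  intro p hp hf
  obtain ⟨i, hi⟩ := hf
  have hlen : p.length = 2 := by
    fin_cases hp <;> rfl
  rw [hlen] at hi
  have h0 : D i = p.getD 0 0 := by rw [hi]; rfl
  have h1 : D (i + 1) = p.getD 1 0 := by rw [hi]; rfl
  rcases Nat.even_or_odd i with he | ho
  · have h2 : i % 2 = 0 := Nat.even_iff.mp he
    have h3 : (i + 1) % 2 = 1 := by omega
    have hA := (Dparity i).1 h2
    have hB := (Dparity (i + 1)).2 h3
    fin_cases hp <;>
      first
        | exact absurd (h0 ▸ hA) (by decide)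
        | exact absurd (h1 ▸ hB) (by decide)
  · have h2 : i % 2 = 1 := Nat.odd_iff.mp ho
    have h3 : (i + 1) % 2 = 0 := by omega
    have hA := (Dparity i).2 h2
    have hB := (Dparity (i + 1)).1 h3
    fin_cases hp <;>
      first
        | exact absurd (h0 ▸ hA) (by decide)
        | exact absurd (h1 ▸ hB) (by decide)
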